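/- arXiv:2512.24552 — 2 statements merged into one kernel-verified Lean document; each statement's English description precedes it below -/
import Mathlib

section
/- Let f : ℝ^n → ℝ be differentiable and bounded below, attaining its minimum value f* at a point x*. Assume f has β-Lipschitz gradient in the sense that f(y) ≤ f(x) + ⟪∇f(x), y − x⟫ + (β/2)‖y − x‖² for all x, y, and that f satisfies the Polyak–Łojasiewicz condition (1/2)‖∇f(x)‖² ≥ μ·(f(x) − f*) for all x, with μ > 0. Let α > 0 satisfy β < 2α and μ < αβ/(2α − β), and set ρ_∞ := 1 − μ(2α − β)/(αβ), so that ρ_∞ ∈ (0,1). Suppose the sequence (x_k) in ℝ^n satisfies x_{k+1} = x_k − η_k · H_k⁻¹ ∇f(x_k), where each H_k is a diagonal matrix with diagonal entries in [α, β] and the scalar step sizes satisfy η_k ∈ (0, 1] with ∑_{k} (1 − η_k) < ∞. Then there exists a constant C > 0 such that f(x_k) − f* ≤ C · ρ_∞^k for all k; i.e., f(x_k) converges to f* at a linear (geometric) rate ρ_∞. -/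
/-!
The smoothness bound along the step `-η H⁻¹ g` splits into coordinates with weights
`η/dᵢ - (β/2)(η/dᵢ)²`; on `dᵢ ∈ [α, β]` and `η ≤ 1` each weight is at least `η(2α - β)/(2αβ)`,
so one step decreases `f` by at least `η(2α - β)/(2αβ) ‖∇f‖²`. The PL inequality turns this into
`f(x_{k+1}) - f* ≤ (ρ_∞ + (1 - ρ_∞)(1 - η_k)) (f(x_k) - f*)`, and a discrete Grönwall argument
bounds the product of the perturbations `1 + (1 - ρ_∞)(1 - η_k)/ρ_∞` by the exponential of their
(finite) sum.
-/

open RealInnerProductSpace Matrix Set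

theorem exists_le_mul_pow_of_le_add_mul {E s : ℕ → ℝ} {ρ : ℝ} (hρ : 0 < ρ) (hE₀ : 0 ≤ E 0)
    (hs : ∀ k, 0 ≤ s k) (hsum : Summable s) (hstep : ∀ k, E (k + 1) ≤ (ρ + s k) * E k) :
    ∃ C > 0, ∀ k, E k ≤ C * ρ ^ k := by
  have hrescaled (k : ℕ) : E (k + 1) / ρ ^ (k + 1) ≤ (1 + s k / ρ) * (E k / ρ ^ k) + 0 :=
    calc E (k + 1) / ρ ^ (k + 1) ≤ (ρ + s k) * E k / ρ ^ (k + 1) := by gcongr; exact hstep k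
      _ = (1 + s k / ρ) * (E k / ρ ^ k) + 0 := by field_simp; ring
  have hgronwall (k : ℕ) : E k / ρ ^ k ≤ E 0 * Real.exp (∑ j ∈ Finset.range k, s j / ρ) := by
    simpa using discrete_gronwall (u := fun k ↦ E k / ρ ^ k) (b := 0) (n₀ := 0)
      (by simpa using hE₀) (fun k _ ↦ hrescaled k) (fun k _ ↦ div_nonneg (hs k) hρ.le)
      (fun _ _ ↦ le_rfl) (Nat.zero_le k)
  refine ⟨(E 0 + 1) * Real.exp (∑' j, s j / ρ), by positivity, fun k ↦ ?_⟩
  have hpartial : ∑ j ∈ Finset.range k, s j / ρ ≤ ∑' j, s j / ρ :=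
    (hsum.div_const ρ).sum_le_tsum _ fun j _ ↦ div_nonneg (hs j) hρ.le
  calc E k = E k / ρ ^ k * ρ ^ k := by field_simp
    _ ≤ (E 0 + 1) * Real.exp (∑' j, s j / ρ) * ρ ^ k := by
      gcongr
      calc E k / ρ ^ k ≤ E 0 * Real.exp (∑ j ∈ Finset.range k, s j / ρ) := hgronwall k
        _ ≤ (E 0 + 1) * Real.exp (∑' j, s j / ρ) := by gcongr; linarith

theorem mul_le_div_sub_sq {α β η d : ℝ} (hα : 0 < α) (hβα : β ≤ 2 * α) (hd : d ∈ Icc α β)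
    (hη : η ∈ Ioc 0 1) :
    η * ((2 * α - β) / (2 * (α * β))) ≤ η / d - β / 2 * (η / d) ^ 2 := by
  obtain ⟨hαd, hdβ⟩ := hd
  obtain ⟨hη₀, hη₁⟩ := hη
  have hd₀ : 0 < d := hα.trans_le hαd
  have hβ : 0 < β := hd₀.trans_le hdβ
  have hcoeff : (2 * α - β) / (2 * (α * β)) ≤ 1 / d - β / 2 * (1 / d) ^ 2 := by
    rw [div_le_iff₀ (by positivity)]
    field_simp
    have hαβ : 0 ≤ β - α := sub_nonneg.2 (hαd.trans hdβ)
    -- `αβ(2d - β) - (2α - β)d² = (2α - β)(d - α)(β - d) + (β - α)((β + 2α)(d - α) + α(2α - β))`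
    nlinarith [mul_nonneg (mul_nonneg (sub_nonneg.2 hβα) (sub_nonneg.2 hαd)) (sub_nonneg.2 hdβ),
      mul_nonneg hαβ (mul_nonneg (by positivity : (0 : ℝ) ≤ β + 2 * α) (sub_nonneg.2 hαd)),
      mul_nonneg hαβ (mul_nonneg hα.le (sub_nonneg.2 hβα))]
  have hη_slack : 0 ≤ β / 2 * (1 / d) ^ 2 * (η * (1 - η)) := by
    have := sub_nonneg.2 hη₁
    positivity
  calc η * ((2 * α - β) / (2 * (α * β))) ≤ η * (1 / d - β / 2 * (1 / d) ^ 2) := by gcongr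
    _ ≤ η * (1 / d - β / 2 * (1 / d) ^ 2) + β / 2 * (1 / d) ^ 2 * (η * (1 - η)) := by linarith
    _ = η / d - β / 2 * (η / d) ^ 2 := by ring

theorem inner_add_norm_sq_le_of_apply_eq_neg_mul {ι : Type*} [Fintype ι]
    {g v : EuclideanSpace ℝ ι} {s : ι → ℝ} {β c : ℝ} (hv : ∀ i, v i = -(s i * g i))
    (hs : ∀ i, c ≤ s i - β / 2 * s i ^ 2) :
    ⟪g, v⟫ + β / 2 * ‖v‖ ^ 2 ≤ -(c * ‖g‖ ^ 2) := by
  have hcoord : ⟪g, v⟫ + β / 2 * ‖v‖ ^ 2 = -∑ i, (s i - β / 2 * s i ^ 2) * g i ^ 2 := by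
    simp only [PiLp.inner_apply, EuclideanSpace.norm_sq_eq, Real.norm_eq_abs, sq_abs, hv,
      RCLike.inner_apply, conj_trivial, Finset.mul_sum, ← Finset.sum_add_distrib,
      ← Finset.sum_neg_distrib]
    exact Finset.sum_congr rfl fun i _ ↦ by ring
  have hweighted : c * ‖g‖ ^ 2 ≤ ∑ i, (s i - β / 2 * s i ^ 2) * g i ^ 2 := by
    simp only [EuclideanSpace.norm_sq_eq, Real.norm_eq_abs, sq_abs, Finset.mul_sum]
    exact Finset.sum_le_sum fun i _ ↦ by gcongr; exact hs i
  linarith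

section DiagonalPreconditioner

variable {ι : Type*} [Fintype ι] [DecidableEq ι]

noncomputable def diagPrecond (d : ι → ℝ) (g : EuclideanSpace ℝ ι) : EuclideanSpace ℝ ι :=
  (WithLp.equiv 2 (ι → ℝ)).symm ((diagonal d)⁻¹ *ᵥ WithLp.equiv 2 (ι → ℝ) g)

theorem diagPrecond_apply {d : ι → ℝ} (hd : ∀ i, d i ≠ 0) (g : EuclideanSpace ℝ ι) (i : ι) :
    diagPrecond d g i = g i / d i := by
  have hinv : (diagonal d)⁻¹ = diagonal fun i ↦ (d i)⁻¹ :=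
    inv_eq_right_inv <| by simp [diagonal_mul_diagonal, hd]
  simp [diagPrecond, hinv, mulVec_diagonal, div_eq_inv_mul]

theorem le_sub_mul_norm_sq_of_diagPrecond_step {f : EuclideanSpace ℝ ι → ℝ}
    {x g : EuclideanSpace ℝ ι} {α β η : ℝ} {d : ι → ℝ} (hα : 0 < α) (hβα : β ≤ 2 * α)
    (hd : ∀ i, d i ∈ Icc α β) (hη : η ∈ Ioc 0 1)
    (hsmooth : ∀ y, f y ≤ f x + ⟪g, y - x⟫ + β / 2 * ‖y - x‖ ^ 2) :
    f (x - η • diagPrecond d g) ≤ f x - η * ((2 * α - β) / (2 * (α * β))) * ‖g‖ ^ 2 := by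
  have hd₀ (i : ι) : d i ≠ 0 := (hα.trans_le (hd i).1).ne'
  have hmodel := inner_add_norm_sq_le_of_apply_eq_neg_mul (g := g)
    (v := -(η • diagPrecond d g)) (s := fun i ↦ η / d i) (β := β)
    (fun i ↦ by simp [diagPrecond_apply hd₀]; ring) (fun i ↦ mul_le_div_sub_sq hα hβα (hd i) hη)
  have hstep := hsmooth (x - η • diagPrecond d g)
  rw [sub_sub_cancel_left] at hstep
  linarith

end DiagonalPreconditioner

theorem ocp_ls_linear_convergence_general
    (n : ℕ) (f : EuclideanSpace ℝ (Fin n) → ℝ)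
    (fstar : ℝ) (hbdd : ∀ x, fstar ≤ f x)
    (α β μ : ℝ) (hα : 0 < α) (hβ : 0 < β) (hμ : 0 < μ)
    (hsmooth : ∀ x y : EuclideanSpace ℝ (Fin n),
      f y ≤ f x + ⟪gradient f x, y - x⟫ + β / 2 * ‖y - x‖ ^ 2)
    (hPL : ∀ x : EuclideanSpace ℝ (Fin n),
      μ * (f x - fstar) ≤ 1 / 2 * ‖gradient f x‖ ^ 2)
    (hβα : β < 2 * α) (hμle : μ < α * β / (2 * α - β))
    (ρ : ℝ) (hρ : ρ = 1 - μ * (2 * α - β) / (α * β))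
    (x : ℕ → EuclideanSpace ℝ (Fin n))
    (D : ℕ → Fin n → ℝ) (η : ℕ → ℝ)
    (hD : ∀ k i, D k i ∈ Set.Icc α β)
    (hη : ∀ k, η k ∈ Set.Ioc (0 : ℝ) 1)
    (hsum : Summable (fun k => 1 - η k))
    (hupd : ∀ k, x (k + 1) = x k - η k •
      (WithLp.equiv 2 (Fin n → ℝ)).symm
        (((Matrix.diagonal (D k))⁻¹).mulVec
          ((WithLp.equiv 2 (Fin n → ℝ)) (gradient f (x k))))) :
    ∃ C > 0, ∀ k, f (x k) - fstar ≤ C * ρ ^ k := by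
  have h2αβ : 0 < 2 * α - β := by linarith
  set c₀ := (2 * α - β) / (2 * (α * β)) with hc₀_def
  have hc₀ : 1 - ρ = 2 * μ * c₀ := by rw [hρ, hc₀_def]; field_simp; ring
  have hρ₀ : 0 < ρ := by
    rw [lt_div_iff₀ h2αβ] at hμle
    rw [hρ, sub_pos, div_lt_one (by positivity)]
    linarith
  have hρ₁ : ρ ≤ 1 := by linarith [show 0 ≤ 2 * μ * c₀ by positivity]
  have hstep (k : ℕ) : f (x (k + 1)) - fstar ≤ (ρ + (1 - ρ) * (1 - η k)) * (f (x k) - fstar) := by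
    have hdescent : f (x (k + 1)) ≤ f (x k) - η k * c₀ * ‖gradient f (x k)‖ ^ 2 :=
      hupd k ▸ le_sub_mul_norm_sq_of_diagPrecond_step hα hβα.le (hD k) (hη k) (hsmooth (x k))
    have hPL_step : η k * c₀ * (2 * μ * (f (x k) - fstar)) ≤ η k * c₀ * ‖gradient f (x k)‖ ^ 2 := by
      gcongr
      · exact mul_nonneg (hη k).1.le (by positivity)
      · linarith [hPL (x k)]
    linear_combination hdescent + hPL_step + (η k * (f (x k) - fstar)) * hc₀
  exact exists_le_mul_pow_of_le_add_mul hρ₀ (sub_nonneg.2 (hbdd (x 0)))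
    (fun k ↦ mul_nonneg (sub_nonneg.2 hρ₁) (sub_nonneg.2 (hη k).2)) (hsum.mul_left (1 - ρ)) hstep

/-- Convergence theorem for the OCP-LS optimizer: under β-smoothness, the
Polyak–Łojasiewicz condition with constant μ > 0, the parameter relations
β < 2α and μ < αβ/(2α − β), a diagonally preconditioned gradient iteration
`x_{k+1} = x_k − η_k • H_k⁻¹ ∇f(x_k)` with diagonal entries of `H_k` in `[α, β]`
and step sizes `η_k ∈ (0,1]` with `∑ (1 − η_k) < ∞` converges at the linear
rate `ρ_∞ = 1 − μ(2α − β)/(αβ)`. -/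
theorem ocp_ls_linear_convergence
    (n : ℕ) (f : EuclideanSpace ℝ (Fin n) → ℝ)
    (hdiff : Differentiable ℝ f)
    (fstar : ℝ) (xstar : EuclideanSpace ℝ (Fin n))
    (hmin : f xstar = fstar) (hbdd : ∀ x, fstar ≤ f x)
    (α β μ : ℝ) (hα : 0 < α) (hβ : 0 < β) (hμ : 0 < μ)
    (hsmooth : ∀ x y : EuclideanSpace ℝ (Fin n),
      f y ≤ f x + ⟪gradient f x, y - x⟫ + β / 2 * ‖y - x‖ ^ 2)
    (hPL : ∀ x : EuclideanSpace ℝ (Fin n),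
      μ * (f x - fstar) ≤ 1 / 2 * ‖gradient f x‖ ^ 2)
    (hβα : β < 2 * α) (hμle : μ < α * β / (2 * α - β))
    (ρ : ℝ) (hρ : ρ = 1 - μ * (2 * α - β) / (α * β))
    (x : ℕ → EuclideanSpace ℝ (Fin n))
    (D : ℕ → Fin n → ℝ) (η : ℕ → ℝ)
    (hD : ∀ k i, D k i ∈ Set.Icc α β)
    (hη : ∀ k, η k ∈ Set.Ioc (0 : ℝ) 1)
    (hsum : Summable (fun k => 1 - η k))
    (hupd : ∀ k, x (k + 1) = x k - η k •
      (WithLp.equiv 2 (Fin n → ℝ)).symm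
        (((Matrix.diagonal (D k))⁻¹).mulVec
          ((WithLp.equiv 2 (Fin n → ℝ)) (gradient f (x k))))) :
    ∃ C > 0, ∀ k, f (x k) - fstar ≤ C * ρ ^ k :=
  ocp_ls_linear_convergence_general n f fstar hbdd α β μ hα hβ hμ hsmooth hPL hβα hμle ρ hρ x D η hD
    hη hsum hupd
end

section
/- Let f : ℝ^n → ℝ be differentiable, bounded below with minimum value f* attained, satisfying the β-smoothness condition f(y) ≤ f(x) + ⟪∇f(x), y − x⟫ + (β/2)‖y − x‖² and the Polyak–Łojasiewicz condition (1/2)‖∇f(x)‖² ≥ μ(f(x) − f*) for all x, with β, μ > 0. Let H be a diagonal matrix with diagonal entries in [α, β], where α > 0, let x ∈ ℝ^n, and let η ∈ [0, 2α/β]. Then the point x⁺ := x − η H⁻¹ ∇f(x) satisfies f(x⁺) − f* ≤ (1 − (2μαη − μβη²)/(αβ)) · (f(x) − f*). -/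
open RealInnerProductSpace

set_option maxHeartbeats 1000000 in
/-- One-step contraction estimate for the preconditioned gradient step under
the Polyak–Łojasiewicz condition: if `f` is β-smooth and μ-PL, `H = diag(d)`
with `d i ∈ [α, β]`, `α > 0`, and `η ∈ [0, 2α/β]`, then
`x⁺ = x − η H⁻¹ ∇f(x)` satisfies
`f(x⁺) − f* ≤ (1 − (2μαη − μβη²)/(αβ)) (f(x) − f*)`. -/
theorem ocp_ls_one_step_contraction
    (n : ℕ) (f : EuclideanSpace ℝ (Fin n) → ℝ)
    (hdiff : Differentiable ℝ f)
    (fstar : ℝ) (xstar : EuclideanSpace ℝ (Fin n))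
    (hmin : f xstar = fstar) (hbdd : ∀ x, fstar ≤ f x)
    (α β μ : ℝ) (hα : 0 < α) (hβ : 0 < β) (hμ : 0 < μ)
    (hsmooth : ∀ x y : EuclideanSpace ℝ (Fin n),
      f y ≤ f x + ⟪gradient f x, y - x⟫ + β / 2 * ‖y - x‖ ^ 2)
    (hPL : ∀ x : EuclideanSpace ℝ (Fin n),
      μ * (f x - fstar) ≤ 1 / 2 * ‖gradient f x‖ ^ 2)
    (d : Fin n → ℝ) (hd : ∀ i, d i ∈ Set.Icc α β)
    (x : EuclideanSpace ℝ (Fin n))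
    (η : ℝ) (hη : η ∈ Set.Icc (0 : ℝ) (2 * α / β)) :
    f (x - η • (WithLp.equiv 2 (Fin n → ℝ)).symm
        (((Matrix.diagonal d)⁻¹).mulVec
          ((WithLp.equiv 2 (Fin n → ℝ)) (gradient f x)))) - fstar
      ≤ (1 - (2 * μ * α * η - μ * β * η ^ 2) / (α * β)) * (f x - fstar) := by
  obtain ⟨hη0, hη2⟩ := hη
  have hηβ : β * η ≤ 2 * α := by
    have := (le_div_iff₀ hβ).mp hη2; linarith
  have hdne : ∀ i, d i ≠ 0 := fun i => ne_of_gt (lt_of_lt_of_le hα (hd i).1)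
  have hinv : (Matrix.diagonal d)⁻¹ = Matrix.diagonal (fun i => (d i)⁻¹) := by
    apply Matrix.inv_eq_right_inv
    rw [Matrix.diagonal_mul_diagonal]
    simp [mul_inv_cancel₀, hdne]
  set g := gradient f x with hg
  set u : EuclideanSpace ℝ (Fin n) := (WithLp.equiv 2 (Fin n → ℝ)).symm
      (((Matrix.diagonal d)⁻¹).mulVec ((WithLp.equiv 2 (Fin n → ℝ)) g)) with hu
  have hui : ∀ i, u i = (d i)⁻¹ * g i := by
    intro i
    simp [hu, hinv, Matrix.mulVec_diagonal]
  set c : ℝ := η * (β * η - 2 * α) / (2 * α * β) with hc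
  have hc0 : c ≤ 0 := by
    apply div_nonpos_of_nonpos_of_nonneg
    · nlinarith
    · nlinarith
  have hsum : -η * ⟪g, u⟫ + β / 2 * ‖(-η) • u‖ ^ 2 ≤ c * ‖g‖ ^ 2 := by
    have hIP : ⟪g, u⟫ = ∑ i, g i * u i := by
      simp [PiLp.inner_apply, RCLike.inner_apply, mul_comm]
    have hnu : ‖(-η) • u‖ ^ 2 = ∑ i, η ^ 2 * (u i) ^ 2 := by
      rw [norm_smul, mul_pow, norm_neg, Real.norm_eq_abs, sq_abs,
        EuclideanSpace.norm_eq, Real.sq_sqrt (by positivity), Finset.mul_sum]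
      simp only [Real.norm_eq_abs, sq_abs]
    have hng : ‖g‖ ^ 2 = ∑ i, (g i) ^ 2 := by
      rw [EuclideanSpace.norm_eq, Real.sq_sqrt (by positivity)]
      congr 1; funext i; rw [Real.norm_eq_abs, sq_abs]
    rw [hIP, hnu, hng, Finset.mul_sum, Finset.mul_sum, Finset.mul_sum, ← Finset.sum_add_distrib]
    apply Finset.sum_le_sum
    intro i _
    rw [hui i]
    obtain ⟨hdi1, hdi2⟩ := hd i
    have hdi0 : 0 < d i := lt_of_lt_of_le hα hdi1
    have hba : (0:ℝ) ≤ β - α := by linarith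
    have ht1 : (0:ℝ) ≤ β - d i := by linarith
    have ht2 : (0:ℝ) ≤ d i - α := by linarith
    have hw : (0:ℝ) ≤ 2 * α - β * η := by linarith
    have T1 : (0:ℝ) ≤ α * ((β - d i) * ((β - α) * (η * (2 * α - β * η)))) :=
      mul_nonneg hα.le (mul_nonneg ht1 (mul_nonneg hba (mul_nonneg hη0 hw)))
    have T2 : (0:ℝ) ≤ β ^ 2 * ((β - α) * (η ^ 2 * (d i - α))) :=
      mul_nonneg (sq_nonneg β) (mul_nonneg hba (mul_nonneg (sq_nonneg η) ht2))
    have T3 : (0:ℝ) ≤ η * ((2 * α - β * η) * ((d i - α) * (β - d i))) :=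
      mul_nonneg hη0 (mul_nonneg hw (mul_nonneg ht2 ht1))
    have hLα : (0:ℝ) ≤ η * (α * ((β - α) * (2 * α - β * η))) :=
      mul_nonneg hη0 (mul_nonneg hα.le (mul_nonneg hba hw))
    have hLβ : (0:ℝ) ≤ η * (β ^ 2 * η * (β - α)) :=
      mul_nonneg hη0 (mul_nonneg (mul_nonneg (sq_nonneg β) hη0) hba)
    have hq : 0 ≤ η * ((β * η - 2 * α) * (d i) ^ 2 + 2 * α * β * (d i) - α * β ^ 2 * η) := by
      rcases le_or_gt 0 (β * η * (α + β) - 2 * α ^ 2) with hs | hs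
      · have hk : (0:ℝ) ≤ η * ((β * η * (α + β) - 2 * α ^ 2) * (d i - α)) :=
          mul_nonneg hη0 (mul_nonneg hs ht2)
        nlinarith [T3, hk, hLα]
      · have hk : (0:ℝ) ≤ η * ((2 * α ^ 2 - β * η * (α + β)) * (β - d i)) :=
          mul_nonneg hη0 (mul_nonneg (by linarith) ht1)
        nlinarith [T3, hk, hLβ]
    have key : -η * ((d i)⁻¹) + β / 2 * η ^ 2 * ((d i)⁻¹) ^ 2 ≤ c := by
      have hrw : c - (-η * ((d i)⁻¹) + β / 2 * η ^ 2 * ((d i)⁻¹) ^ 2)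
          = η * ((β * η - 2 * α) * (d i) ^ 2 + 2 * α * β * (d i) - α * β ^ 2 * η)
            / (2 * α * β * (d i) ^ 2) := by
        rw [hc]; field_simp; ring
      have : 0 ≤ c - (-η * ((d i)⁻¹) + β / 2 * η ^ 2 * ((d i)⁻¹) ^ 2) := by
        rw [hrw]; positivity
      linarith
    nlinarith [mul_le_mul_of_nonneg_right key (sq_nonneg (g i))]
  set y := x - η • u with hy
  have hyx : y - x = (-η) • u := by
    rw [hy, sub_sub_cancel_left, ← neg_smul]
  have hstep : f y ≤ f x + c * ‖g‖ ^ 2 := by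
    have := hsmooth x y
    rw [hyx, real_inner_smul_right] at this
    rw [← hg] at this
    calc f y ≤ f x + -η * ⟪g, u⟫ + β / 2 * ‖(-η) • u‖ ^ 2 := by linarith
    _ ≤ f x + c * ‖g‖ ^ 2 := by linarith
  have hgl : 2 * μ * (f x - fstar) ≤ ‖g‖ ^ 2 := by
    have := hPL x; rw [← hg] at this; linarith
  have hfinal : c * ‖g‖ ^ 2 ≤ c * (2 * μ * (f x - fstar)) :=
    mul_le_mul_of_nonpos_left hgl hc0
  have hρ : 1 + 2 * μ * c = 1 - (2 * μ * α * η - μ * β * η ^ 2) / (α * β) := by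
    rw [hc]; field_simp; ring
  have : f y - fstar ≤ (1 + 2 * μ * c) * (f x - fstar) := by nlinarith
  rw [hρ] at this
  exact this
end
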